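/- For all s, t ∈ V with s ≠ t, writing d*(s,t) = d(s,u) + ω'(u,v) + d(v,t), the new number of shortest paths satisfies the trichotomy: if d*(s,t) < d(s,t) then σ'_{st} = σ_{su} · σ_{vt}; if d*(s,t) = d(s,t) < ∞ then σ'_{st} = σ_{st} + σ_{su} · σ_{vt}; and if d*(s,t) > d(s,t) then σ'_{st} = σ_{st}. -/

import Mathlib

open scoped BigOperators

/-- A directed graph on vertex set `V` with positive real edge weights. -/
structure WDigraph (V : Type*) where
  /-- the edge relation -/
  E : V → V → Prop
  /-- the edge weights -/
  w : V → V → ℝ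
  /-- weights of edges are positive -/
  pos : ∀ a b, E a b → 0 < w a b

namespace WDigraph

variable {V : Type*} [Fintype V] [DecidableEq V]

/-- `p` is a simple path from `s` to `t` in `G`: a nonempty list of pairwise
distinct vertices starting at `s`, ending at `t`, consecutive vertices joined
by edges. (Since all weights are positive, every shortest path is simple, so
it suffices to consider simple paths throughout.) -/
def IsPath (G : WDigraph V) (s t : V) (p : List V) : Prop :=
  List.Chain' G.E p ∧ p.head? = some s ∧ p.getLast? = some t ∧ p.Nodup

/-- The total weight of a list of vertices (sum of the weights of consecutive pairs). -/
def pw (G : WDigraph V) : List V → ℝ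
  | [] => 0
  | [_] => 0
  | a :: b :: r => G.w a b + G.pw (b :: r)

/-- `d(s,t)`: shortest-path distance from `s` to `t`, equal to `⊤` (infinity)
if `t` is unreachable from `s`. -/
noncomputable def dist (G : WDigraph V) (s t : V) : EReal :=
  sInf ((fun p => (G.pw p : EReal)) '' {p | G.IsPath s t p})

/-- The set of shortest `s`-`t` paths in `G`. -/
def SP (G : WDigraph V) (s t : V) : Set (List V) :=
  {p | G.IsPath s t p ∧ (G.pw p : EReal) = G.dist s t}

/-- `σ_{st}`: the number of shortest `s`-`t` paths in `G`. -/
noncomputable def sigma (G : WDigraph V) (s t : V) : ℕ :=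
  (G.SP s t).ncard

/-- `σ_{st}(v)`: the number of shortest `s`-`t` paths in `G` that contain `v`. -/
noncomputable def sigmaV (G : WDigraph V) (s t v : V) : ℕ :=
  {p ∈ G.SP s t | v ∈ p}.ncard

/-- `σ_{st}(v,w)`: the number of shortest `s`-`t` paths in `G` using the edge `(v,w)`. -/
noncomputable def sigmaE (G : WDigraph V) (s t v w : V) : ℕ :=
  {p ∈ G.SP s t | [v, w] <:+: p}.ncard

/-- `P_s(t)`: the set of predecessors of `t` with respect to source `s`:
nodes `y` with `(y,t) ∈ E` and `d(s,y) + ω(y,t) = d(s,t) < ∞`. -/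
def pred (G : WDigraph V) (s t : V) : Set V :=
  {y | G.E y t ∧ G.dist s y + (G.w y t : EReal) = G.dist s t ∧ G.dist s t < ⊤}

/-- `δ_{s•}(v)`: Brandes's one-sided dependency of `s` on `v`
(a summand is `0` whenever its denominator is `0`, which is automatic since
in Lean division by zero yields zero). -/
noncomputable def delta (G : WDigraph V) (s v : V) : ℝ :=
  ∑ᶠ t ∈ {t : V | t ≠ s ∧ t ≠ v}, (G.sigmaV s t v : ℝ) / (G.sigma s t : ℝ)

/-- `c_B(v)`: the betweenness centrality of `v`. -/
noncomputable def bc (G : WDigraph V) (v : V) : ℝ :=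
  ∑ᶠ s ∈ {s : V | s ≠ v}, G.delta s v

/-- `G'` is obtained from `G` by the incremental update `(u, v, ω'(u,v))`:
either a new edge `(u,v) ∉ E` is inserted with positive weight, or the weight
of the existing edge `(u,v)` is decreased; all other edges and weights are
unchanged. (Positivity of all weights is part of the `WDigraph` structure.) -/
structure IsUpdate (G G' : WDigraph V) (u v : V) : Prop where
  /-- the updated edge is present in `G'` -/
  edge' : G'.E u v
  /-- `E' = E ∪ {(u,v)}` -/
  edge_iff : ∀ a b, G'.E a b ↔ G.E a b ∨ a = u ∧ b = v
  /-- `ω'` agrees with `ω` on all edges other than `(u,v)` -/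
  weight_eq : ∀ a b, ¬(a = u ∧ b = v) → G'.w a b = G.w a b
  /-- either an insertion of a new edge, or a weight decrease of an existing one -/
  insert_or_decrease : ¬ G.E u v ∨ (G.E u v ∧ G'.w u v < G.w u v)

/-- `S(t)`: the affected sources of `t`. -/
def affS (G G' : WDigraph V) (t : V) : Set V :=
  {s | G.dist s t > G'.dist s t ∨ G.sigma s t ≠ G'.sigma s t}

/-- `T(s)`: the affected targets of `s`. -/
def affT (G G' : WDigraph V) (s : V) : Set V :=
  {t | G.dist s t > G'.dist s t ∨ G.sigma s t ≠ G'.sigma s t}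

/-- `Δ_{s•}(v) = Σ_{t ∈ T(s), t ≠ v} σ_{st}(v)/σ_{st}`, computed in `G`
(`0`-convention for zero denominators). -/
noncomputable def Delta (G G' : WDigraph V) (s v : V) : ℝ :=
  ∑ᶠ t ∈ {t : V | t ∈ affT G G' s ∧ t ≠ v}, (G.sigmaV s t v : ℝ) / (G.sigma s t : ℝ)

/-- `Δ'_{s•}(v) = Σ_{t ∈ T(s), t ≠ v} σ'_{st}(v)/σ'_{st}`, computed in `G'`
(`0`-convention for zero denominators). -/
noncomputable def Delta' (G G' : WDigraph V) (s v : V) : ℝ :=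
  ∑ᶠ t ∈ {t : V | t ∈ affT G G' s ∧ t ≠ v}, (G'.sigmaV s t v : ℝ) / (G'.sigma s t : ℝ)

end WDigraph

/-!
Every path of `G'` either avoids the updated edge `(u,v)`, and is then a path of `G` of the same
weight, or splits at that edge into paths `s ⇝ u` and `v ⇝ t` of `G`; hence
`d'(s,t) = min (d(s,t), d*(s,t))`. The shortest paths of `G'` avoiding the edge are those of `G`
when `d(s,t) ≤ d*(s,t)` (a shortest path of `G` through `(u,v)` would become strictly shorter),
and there are none otherwise. The shortest paths through the edge correspond, by concatenation,
to pairs of shortest paths `s ⇝ u`, `v ⇝ t` of `G` when `d*(s,t) ≤ d(s,t)` (such pairs are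
vertex-disjoint, as a common vertex would give a shorter `s`-`t` walk), and there are none
otherwise.
-/

namespace List

variable {α : Type*} {u v a b : α} {l₁ l₂ r : List α}

theorem infix_append_of_getLast?_of_head? (hl : l₁.getLast? = some u) (hh : l₂.head? = some v) :
    [u, v] <:+: l₁ ++ l₂ := by
  obtain ⟨l₁, rfl⟩ := getLast?_eq_some_iff.1 hl
  obtain ⟨l₂, rfl⟩ := head?_eq_some_iff.1 hh
  exact ⟨l₁, l₂, by simp⟩

theorem Disjoint.not_infix_pair (hd : l₁.Disjoint l₂) (hl : l₁.getLast? = some u)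
    (hh : l₂.head? = some v) : ¬ [u, v] <:+: l₁ ∧ ¬ [u, v] <:+: l₂ :=
  ⟨fun hi => hd (hi.subset (by simp)) (mem_of_mem_head? hh),
    fun hi => hd (mem_of_mem_getLast? hl) (hi.subset (by simp))⟩

theorem not_infix_pair_cons_cons (hi : ¬ [u, v] <:+: a :: b :: r) :
    ¬ (a = u ∧ b = v) ∧ ¬ [u, v] <:+: b :: r :=
  ⟨by rintro ⟨rfl, rfl⟩; exact hi ⟨[], r, rfl⟩,
    fun hi' => hi (hi'.trans (suffix_cons a _).isInfix)⟩

end List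

namespace WDigraph

variable {V : Type*}

/-- `d*(s,t)` in the paper's notation. -/
noncomputable def distVia (G G' : WDigraph V) (u v s t : V) : EReal :=
  G.dist s u + G'.w u v + G.dist v t

def SPVia (H : WDigraph V) (u v s t : V) : Set (List V) :=
  {p ∈ H.SP s t | [u, v] <:+: p}

variable {G G' : WDigraph V} {s t u v x : V} {p q p₁ p₂ : List V}

theorem pw_nonneg : ∀ {p : List V}, p.IsChain G.E → 0 ≤ G.pw p
  | [], _ | [_], _ => le_rfl
  | a :: b :: r, hp => by
    rw [List.isChain_cons_cons] at hp
    exact add_nonneg (G.pos a b hp.1).le (pw_nonneg hp.2)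

theorem pw_append_cons (G : WDigraph V) :
    ∀ (p : List V) (x : V) (q : List V), G.pw (p ++ x :: q) = G.pw (p ++ [x]) + G.pw (x :: q)
  | [], _, _ => by simp [pw]
  | [_], _, _ => by simp [pw]
  | a :: b :: r, x, q => by
    have ih := pw_append_cons G (b :: r) x q
    simp only [List.cons_append] at ih ⊢
    rw [pw, pw, ih]
    ring

theorem pw_append (G : WDigraph V) {a b : V} (hp : p.getLast? = some a)
    (hq : q.head? = some b) : G.pw (p ++ q) = G.pw p + G.w a b + G.pw q := by
  obtain ⟨p, rfl⟩ := List.getLast?_eq_some_iff.1 hp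
  obtain ⟨q, rfl⟩ := List.head?_eq_some_iff.1 hq
  rw [List.append_assoc, List.singleton_append, pw_append_cons, pw]
  ring

theorem pw_le_pw_of_isChain_append_cons (hc : (p₁ ++ x :: p₂).IsChain G.E) :
    G.pw (p₁ ++ [x]) ≤ G.pw (p₁ ++ x :: p₂) ∧ G.pw (x :: p₂) ≤ G.pw (p₁ ++ x :: p₂) := by
  have h₁ : 0 ≤ G.pw (p₁ ++ [x]) := pw_nonneg (hc.prefix ⟨p₂, by simp⟩)
  have h₂ : 0 ≤ G.pw (x :: p₂) := pw_nonneg (hc.suffix ⟨p₁, rfl⟩)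
  rw [pw_append_cons G p₁ x p₂]
  constructor <;> linarith

theorem IsPath.left_of_append_cons (hp : G.IsPath s t (p₁ ++ x :: p₂)) :
    G.IsPath s x (p₁ ++ [x]) := by
  obtain ⟨hc, hs, -, hn⟩ := hp
  refine ⟨hc.prefix ⟨p₂, by simp⟩, ?_, by simp, hn.sublist (by simp)⟩
  cases p₁ <;> simpa using hs

theorem IsPath.right_of_append_cons (hp : G.IsPath s t (p₁ ++ x :: p₂)) :
    G.IsPath x t (x :: p₂) := by
  obtain ⟨hc, -, ht, hn⟩ := hp
  refine ⟨hc.suffix ⟨p₁, rfl⟩, rfl, ?_, hn.sublist (by simp)⟩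
  rwa [List.getLast?_append_cons] at ht

theorem IsPath.exists_eq_append_of_infix (hp : G.IsPath s t p) (hi : [u, v] <:+: p) :
    ∃ p₁ p₂, p = p₁ ++ p₂ ∧ G.IsPath s u p₁ ∧ G.IsPath v t p₂ ∧ p₁.Disjoint p₂ := by
  obtain ⟨l₁, l₂, rfl⟩ := hi
  have hp' : G.IsPath s t (l₁ ++ u :: v :: l₂) := by simpa using hp
  refine ⟨l₁ ++ [u], v :: l₂, by simp, hp'.left_of_append_cons, ?_, ?_⟩
  · exact (show G.IsPath s t ((l₁ ++ [u]) ++ v :: l₂) by simpa using hp).right_of_append_cons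
  · exact List.disjoint_of_nodup_append (by simpa using hp.2.2.2)

theorem exists_isPath_pw_le : ∀ {p : List V} {s t : V}, p.IsChain G.E → p.head? = some s →
    p.getLast? = some t → ∃ q, G.IsPath s t q ∧ G.pw q ≤ G.pw p
  | [], _, _, _, hs, _ => by simp at hs
  | [a], s, t, hc, hs, ht => by
    obtain rfl : a = s := by simpa using hs
    obtain rfl : a = t := by simpa using ht
    exact ⟨[a], ⟨hc, rfl, rfl, List.nodup_singleton a⟩, le_rfl⟩
  | a :: b :: r, s, t, hc, hs, ht => by
    obtain rfl : a = s := by simpa using hs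
    rw [List.isChain_cons_cons] at hc
    obtain ⟨q, hq, hle⟩ := exists_isPath_pw_le hc.2 rfl (by simpa using ht)
    have hab := G.pos a b hc.1
    have hw : G.pw (a :: b :: r) = G.w a b + G.pw (b :: r) := rfl
    by_cases ha : a ∈ q
    · obtain ⟨q₁, q₂, rfl⟩ := List.append_of_mem ha
      refine ⟨a :: q₂, hq.right_of_append_cons, ?_⟩
      linarith [(pw_le_pw_of_isChain_append_cons hq.1).2]
    · obtain ⟨hqc, hqs, hqt, hqn⟩ := hq
      obtain ⟨q, rfl⟩ := List.head?_eq_some_iff.1 hqs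
      refine ⟨a :: b :: q, ⟨List.isChain_cons_cons.2 ⟨hc.1, hqc⟩, rfl, ?_,
        List.nodup_cons.2 ⟨ha, hqn⟩⟩, ?_⟩
      · simpa using hqt
      · rw [hw, pw]
        linarith

theorem dist_le_pw (hp : G.IsPath s t p) : G.dist s t ≤ G.pw p :=
  sInf_le ⟨p, hp, rfl⟩

theorem dist_le_pw_add_pw (hp : G.IsPath s x p) (hq : G.IsPath x t q) :
    G.dist s t ≤ ((G.pw p + G.pw q : ℝ) : EReal) := by
  obtain ⟨hpc, hps, hpt, -⟩ := hp
  obtain ⟨hqc, hqs, hqt, -⟩ := hq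
  obtain ⟨p, rfl⟩ := List.getLast?_eq_some_iff.1 hpt
  obtain ⟨q, rfl⟩ := List.head?_eq_some_iff.1 hqs
  have hc : (p ++ x :: q).IsChain G.E := by
    simpa using hpc.append_overlap (l₃ := q) hqc (List.cons_ne_nil x [])
  obtain ⟨r, hr, hle⟩ := exists_isPath_pw_le hc (by cases p <;> simpa using hps)
    (by rwa [List.getLast?_append_cons])
  rw [← pw_append_cons]
  exact (dist_le_pw hr).trans (EReal.coe_le_coe_iff.2 hle)

theorem finite_setOf_isPath [Fintype V] (G : WDigraph V) (s t : V) :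
    {p | G.IsPath s t p}.Finite :=
  (List.finite_length_le V (Fintype.card V)).subset fun _ hp => hp.2.2.2.length_le_card

theorem finite_SP [Fintype V] (G : WDigraph V) (s t : V) : (G.SP s t).Finite :=
  (G.finite_setOf_isPath s t).subset fun _ hp => hp.1

theorem exists_mem_SP_pw_le [Fintype V] (hp : G.IsPath s t p) :
    ∃ q ∈ G.SP s t, G.pw q ≤ G.pw p := by
  obtain ⟨q, hq, hmin⟩ := Set.exists_min_image _ G.pw (G.finite_setOf_isPath s t) ⟨p, hp⟩
  refine ⟨q, ⟨hq, le_antisymm (le_sInf ?_) (dist_le_pw hq)⟩, hmin p hp⟩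
  rintro _ ⟨r, hr, rfl⟩
  exact EReal.coe_le_coe_iff.2 (hmin r hr)

theorem dist_lt_top_iff [Fintype V] : G.dist s t < ⊤ ↔ (G.SP s t).Nonempty := by
  refine ⟨fun hlt => ?_, fun ⟨q, hq⟩ => hq.2 ▸ EReal.coe_lt_top _⟩
  by_contra hne
  refine hlt.ne (sInf_eq_top.2 ?_)
  rintro _ ⟨p, hp, rfl⟩
  obtain ⟨q, hq, -⟩ := exists_mem_SP_pw_le hp
  exact absurd ⟨q, hq⟩ hne

theorem dist_ne_bot [Fintype V] (G : WDigraph V) (s t : V) : G.dist s t ≠ ⊥ := by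
  rcases (le_top : G.dist s t ≤ ⊤).lt_or_eq with hlt | htop
  · obtain ⟨q, hq⟩ := dist_lt_top_iff.1 hlt
    exact hq.2 ▸ EReal.coe_ne_bot _
  · exact htop ▸ top_ne_bot

theorem distVia_le (hp₁ : G.IsPath s u p₁) (hp₂ : G.IsPath v t p₂) :
    distVia G G' u v s t ≤ ((G.pw p₁ + G'.w u v + G.pw p₂ : ℝ) : EReal) := by
  rw [EReal.coe_add, EReal.coe_add]
  exact add_le_add (add_le_add (dist_le_pw hp₁) le_rfl) (dist_le_pw hp₂)

theorem distVia_eq_of_mem_SP (hp₁ : p₁ ∈ G.SP s u) (hp₂ : p₂ ∈ G.SP v t) :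
    distVia G G' u v s t = ((G.pw p₁ + G'.w u v + G.pw p₂ : ℝ) : EReal) := by
  rw [distVia, ← hp₁.2, ← hp₂.2, EReal.coe_add, EReal.coe_add]

theorem distVia_lt_top_iff [Fintype V] :
    distVia G G' u v s t < ⊤ ↔ G.dist s u < ⊤ ∧ G.dist v t < ⊤ := by
  simp only [distVia, lt_top_iff_ne_top]
  rw [EReal.add_ne_top_iff_ne_top₂ (EReal.add_ne_bot_iff.2 ⟨G.dist_ne_bot s u,
    EReal.coe_ne_bot _⟩) (G.dist_ne_bot v t),
    EReal.add_ne_top_iff_ne_top_left (EReal.coe_ne_bot _) (EReal.coe_ne_top _)]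

theorem sigma_eq_ncard_sdiff_add_ncard_SPVia [Fintype V] (H : WDigraph V) (u v s t : V) :
    H.sigma s t = (H.SP s t \ H.SPVia u v s t).ncard + (H.SPVia u v s t).ncard :=
  (Set.ncard_sdiff_add_ncard_of_subset (fun _ hp => hp.1) (H.finite_SP s t)).symm

theorem injOn_append_SP (hd : ∀ p₁ ∈ G.SP s u, ∀ p₂ ∈ G.SP v t, p₁.Disjoint p₂) :
    Set.InjOn (fun q : List V × List V => q.1 ++ q.2) (G.SP s u ×ˢ G.SP v t) := by
  rintro ⟨p₁, p₂⟩ ⟨hp₁, hp₂⟩ ⟨q₁, q₂⟩ ⟨hq₁, -⟩ he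
  obtain ⟨p₁, rfl⟩ := List.getLast?_eq_some_iff.1 hp₁.1.2.2.1
  obtain ⟨q₁, rfl⟩ := List.getLast?_eq_some_iff.1 hq₁.1.2.2.1
  have hn : (p₁ ++ u :: p₂).Nodup := by
    simpa using hp₁.1.2.2.2.append hp₂.1.2.2.2 (hd _ hp₁ _ hp₂)
  have hu : u ∉ p₁ ++ p₂ := (List.nodup_cons.1 (List.nodup_middle.1 hn)).1
  rw [List.mem_append, not_or] at hu
  obtain ⟨rfl, -, rfl⟩ := (List.append_cons_inj_of_notMem hu.1 hu.2).1 (by simpa using he)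
  rfl

namespace IsUpdate

theorem isChain (h : IsUpdate G G' u v) (hp : p.IsChain G.E) : p.IsChain G'.E :=
  hp.imp fun a b hab => (h.edge_iff a b).2 (Or.inl hab)

theorem isPath (h : IsUpdate G G' u v) (hp : G.IsPath s t p) : G'.IsPath s t p :=
  ⟨h.isChain hp.1, hp.2⟩

theorem isChain_of_not_infix (h : IsUpdate G G' u v) :
    ∀ {p : List V}, ¬ [u, v] <:+: p → p.IsChain G'.E → p.IsChain G.E
  | [], _, _ => List.isChain_nil
  | [_], _, _ => List.isChain_singleton _
  | a :: b :: r, hi, hp => by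
    rw [List.isChain_cons_cons] at hp ⊢
    obtain ⟨hab, hi⟩ := List.not_infix_pair_cons_cons hi
    exact ⟨((h.edge_iff a b).1 hp.1).resolve_right hab, h.isChain_of_not_infix hi hp.2⟩

theorem isPath_of_not_infix (h : IsUpdate G G' u v) (hi : ¬ [u, v] <:+: p)
    (hp : G'.IsPath s t p) : G.IsPath s t p :=
  ⟨h.isChain_of_not_infix hi hp.1, hp.2⟩

theorem pw_eq_of_not_infix (h : IsUpdate G G' u v) :
    ∀ {p : List V}, ¬ [u, v] <:+: p → G'.pw p = G.pw p
  | [], _ | [_], _ => rfl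
  | a :: b :: r, hi => by
    obtain ⟨hab, hi⟩ := List.not_infix_pair_cons_cons hi
    rw [pw, pw, h.weight_eq a b hab, h.pw_eq_of_not_infix hi]

theorem exists_eq_append (h : IsUpdate G G' u v) (hp : G'.IsPath s t p) (hi : [u, v] <:+: p) :
    ∃ p₁ p₂, p = p₁ ++ p₂ ∧ G.IsPath s u p₁ ∧ G.IsPath v t p₂ ∧
      G'.pw p = G.pw p₁ + G'.w u v + G.pw p₂ := by
  obtain ⟨p₁, p₂, rfl, hp₁, hp₂, hd⟩ := hp.exists_eq_append_of_infix hi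
  obtain ⟨hi₁, hi₂⟩ := hd.not_infix_pair hp₁.2.2.1 hp₂.2.1
  refine ⟨p₁, p₂, rfl, h.isPath_of_not_infix hi₁ hp₁, h.isPath_of_not_infix hi₂ hp₂, ?_⟩
  rw [pw_append G' hp₁.2.2.1 hp₂.2.1, h.pw_eq_of_not_infix hi₁, h.pw_eq_of_not_infix hi₂]

theorem isPath_append (h : IsUpdate G G' u v) (hp₁ : G.IsPath s u p₁) (hp₂ : G.IsPath v t p₂)
    (hd : p₁.Disjoint p₂) :
    G'.IsPath s t (p₁ ++ p₂) ∧ G'.pw (p₁ ++ p₂) = G.pw p₁ + G'.w u v + G.pw p₂ := by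
  obtain ⟨hc₁, hs₁, ht₁, hn₁⟩ := hp₁
  obtain ⟨hc₂, hs₂, ht₂, hn₂⟩ := hp₂
  obtain ⟨hi₁, hi₂⟩ := hd.not_infix_pair ht₁ hs₂
  refine ⟨⟨(h.isChain hc₁).append (h.isChain hc₂) ?_, ?_, ?_, hn₁.append hn₂ hd⟩, ?_⟩
  · simp [ht₁, hs₂, h.edge']
  · simp [List.head?_append, hs₁]
  · simp [List.getLast?_append, ht₂]
  · rw [pw_append G' ht₁ hs₂, h.pw_eq_of_not_infix hi₁, h.pw_eq_of_not_infix hi₂]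

theorem min_dist_distVia_le_dist (h : IsUpdate G G' u v) :
    min (G.dist s t) (distVia G G' u v s t) ≤ G'.dist s t := by
  refine le_sInf ?_
  rintro _ ⟨p, hp, rfl⟩
  dsimp only
  by_cases hi : [u, v] <:+: p
  · obtain ⟨p₁, p₂, rfl, hp₁, hp₂, hw⟩ := h.exists_eq_append hp hi
    rw [hw]
    exact (min_le_right _ _).trans (distVia_le hp₁ hp₂)
  · refine (min_le_left _ _).trans ?_
    rw [h.pw_eq_of_not_infix hi]
    exact dist_le_pw (h.isPath_of_not_infix hi hp)

/-- Two shortest paths `s ⇝ u` and `v ⇝ t` meeting at `x` would give an `s`-`t` walk through `x`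
shorter than `d*(s,t)`. -/
theorem disjoint_of_mem_SP (h : IsUpdate G G' u v) (hD : distVia G G' u v s t ≤ G.dist s t)
    (hp₁ : p₁ ∈ G.SP s u) (hp₂ : p₂ ∈ G.SP v t) : p₁.Disjoint p₂ := by
  intro x hx₁ hx₂
  obtain ⟨a, b, rfl⟩ := List.append_of_mem hx₁
  obtain ⟨c, e, rfl⟩ := List.append_of_mem hx₂
  have hw₁ := (pw_le_pw_of_isChain_append_cons hp₁.1.1).1
  have hw₂ := (pw_le_pw_of_isChain_append_cons hp₂.1.1).2
  have hpos := G'.pos u v h.edge'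
  have hlt : G.dist s t < G.dist s t := calc
    G.dist s t ≤ ((G.pw (a ++ [x]) + G.pw (x :: e) : ℝ) : EReal) :=
      dist_le_pw_add_pw hp₁.1.left_of_append_cons hp₂.1.right_of_append_cons
    _ < ((G.pw (a ++ x :: b) + G'.w u v + G.pw (c ++ x :: e) : ℝ) : EReal) :=
      EReal.coe_lt_coe_iff.2 (by linarith)
    _ = distVia G G' u v s t := (distVia_eq_of_mem_SP hp₁ hp₂).symm
    _ ≤ G.dist s t := hD
  exact lt_irrefl _ hlt

/-- A shortest path of `G` through `(u,v)` has length `> d*(s,t)`, because the update made that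
edge strictly shorter (or it was not an edge of `G` at all). -/
theorem not_infix_of_mem_SP (h : IsUpdate G G' u v) (hd : G.dist s t ≤ distVia G G' u v s t)
    (hp : p ∈ G.SP s t) : ¬ [u, v] <:+: p := by
  intro hi
  have huv : G.E u v := (List.isChain_cons_cons.1 (hp.1.1.infix hi)).1
  obtain ⟨-, hdec⟩ := h.insert_or_decrease.resolve_left (not_not.2 huv)
  obtain ⟨p₁, p₂, rfl, hp₁, hp₂, -⟩ := hp.1.exists_eq_append_of_infix hi
  have hlt : G.dist s t < G.dist s t := calc
    G.dist s t ≤ distVia G G' u v s t := hd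
    _ ≤ ((G.pw p₁ + G'.w u v + G.pw p₂ : ℝ) : EReal) := distVia_le hp₁ hp₂
    _ < ((G.pw p₁ + G.w u v + G.pw p₂ : ℝ) : EReal) := EReal.coe_lt_coe_iff.2 (by linarith)
    _ = G.dist s t := by rw [← pw_append G hp₁.2.2.1 hp₂.2.1, hp.2]
  exact lt_irrefl _ hlt

theorem SP_sdiff_SPVia_eq_empty (h : IsUpdate G G' u v) (hlt : G'.dist s t < G.dist s t) :
    G'.SP s t \ G'.SPVia u v s t = ∅ := by
  refine Set.eq_empty_of_forall_notMem fun p ⟨hp, hnv⟩ => ?_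
  have hi : ¬ [u, v] <:+: p := fun hi => hnv ⟨hp, hi⟩
  have := dist_le_pw (h.isPath_of_not_infix hi hp.1)
  rw [← h.pw_eq_of_not_infix hi, hp.2] at this
  exact hlt.not_ge this

theorem SP_sdiff_SPVia_eq (h : IsUpdate G G' u v) (hd : G.dist s t ≤ distVia G G' u v s t)
    (hd' : G'.dist s t = G.dist s t) : G'.SP s t \ G'.SPVia u v s t = G.SP s t := by
  ext p
  constructor
  · rintro ⟨hp, hnv⟩
    have hi : ¬ [u, v] <:+: p := fun hi => hnv ⟨hp, hi⟩
    exact ⟨h.isPath_of_not_infix hi hp.1, by rw [← h.pw_eq_of_not_infix hi, hp.2, hd']⟩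
  · intro hp
    have hi := h.not_infix_of_mem_SP hd hp
    exact ⟨⟨h.isPath hp.1, by rw [h.pw_eq_of_not_infix hi, hp.2, hd']⟩, fun hv => hi hv.2⟩

theorem SPVia_eq_empty (h : IsUpdate G G' u v) (hlt : G'.dist s t < distVia G G' u v s t) :
    G'.SPVia u v s t = ∅ := by
  refine Set.eq_empty_of_forall_notMem fun p ⟨hp, hi⟩ => ?_
  obtain ⟨p₁, p₂, rfl, hp₁, hp₂, hw⟩ := h.exists_eq_append hp.1 hi
  have := distVia_le (G' := G') hp₁ hp₂
  rw [← hw, hp.2] at this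
  exact hlt.not_ge this

variable [Fintype V]

theorem dist'_eq_distVia (h : IsUpdate G G' u v) (hD : distVia G G' u v s t ≤ G.dist s t)
    (hfin : distVia G G' u v s t < ⊤) : G'.dist s t = distVia G G' u v s t := by
  obtain ⟨⟨q₁, hq₁⟩, ⟨q₂, hq₂⟩⟩ :=
    (distVia_lt_top_iff.1 hfin).imp dist_lt_top_iff.1 dist_lt_top_iff.1
  obtain ⟨hq, hw⟩ := h.isPath_append hq₁.1 hq₂.1 (h.disjoint_of_mem_SP hD hq₁ hq₂)
  refine le_antisymm ?_ ?_
  · exact (dist_le_pw hq).trans_eq (by rw [hw, distVia_eq_of_mem_SP hq₁ hq₂])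
  · simpa [min_eq_right hD] using h.min_dist_distVia_le_dist (s := s) (t := t)

theorem dist'_eq_dist (h : IsUpdate G G' u v) (hd : G.dist s t ≤ distVia G G' u v s t)
    (hfin : G.dist s t < ⊤) : G'.dist s t = G.dist s t := by
  obtain ⟨q, hq⟩ := dist_lt_top_iff.1 hfin
  refine le_antisymm ?_ ?_
  · have := dist_le_pw (h.isPath hq.1)
    rwa [h.pw_eq_of_not_infix (h.not_infix_of_mem_SP hd hq), hq.2] at this
  · simpa [min_eq_left hd] using h.min_dist_distVia_le_dist (s := s) (t := t)

theorem SPVia_eq_image (h : IsUpdate G G' u v) (hD : distVia G G' u v s t ≤ G.dist s t)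
    (hd' : G'.dist s t = distVia G G' u v s t) :
    G'.SPVia u v s t = (fun q : List V × List V => q.1 ++ q.2) '' (G.SP s u ×ˢ G.SP v t) := by
  ext p
  constructor
  · rintro ⟨hp, hi⟩
    obtain ⟨p₁, p₂, rfl, hp₁, hp₂, hw⟩ := h.exists_eq_append hp.1 hi
    obtain ⟨q₁, hq₁, hle₁⟩ := exists_mem_SP_pw_le hp₁
    obtain ⟨q₂, hq₂, hle₂⟩ := exists_mem_SP_pw_le hp₂
    have heq : G.pw p₁ + G'.w u v + G.pw p₂ = G.pw q₁ + G'.w u v + G.pw q₂ := by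
      have := hp.2.trans (hd'.trans (distVia_eq_of_mem_SP hq₁ hq₂))
      rwa [hw, EReal.coe_eq_coe_iff] at this
    refine ⟨(p₁, p₂), ⟨⟨hp₁, ?_⟩, ⟨hp₂, ?_⟩⟩, rfl⟩
    · rw [← hq₁.2, EReal.coe_eq_coe_iff]
      linarith
    · rw [← hq₂.2, EReal.coe_eq_coe_iff]
      linarith
  · rintro ⟨⟨p₁, p₂⟩, ⟨hp₁, hp₂⟩, rfl⟩
    obtain ⟨hp, hw⟩ := h.isPath_append hp₁.1 hp₂.1 (h.disjoint_of_mem_SP hD hp₁ hp₂)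
    exact ⟨⟨hp, by rw [hw, hd', distVia_eq_of_mem_SP hp₁ hp₂]⟩,
      List.infix_append_of_getLast?_of_head? hp₁.1.2.2.1 hp₂.1.2.1⟩

theorem ncard_SPVia (h : IsUpdate G G' u v) (hD : distVia G G' u v s t ≤ G.dist s t)
    (hd' : G'.dist s t = distVia G G' u v s t) :
    (G'.SPVia u v s t).ncard = G.sigma s u * G.sigma v t := by
  rw [h.SPVia_eq_image hD hd', (injOn_append_SP fun _ hp₁ _ hp₂ =>
    h.disjoint_of_mem_SP hD hp₁ hp₂).ncard_image, Set.ncard_prod]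
  rfl

end IsUpdate

variable [Fintype V] [DecidableEq V]

theorem sigma'_trichotomy_general (G G' : WDigraph V) (u v : V)
    (h : IsUpdate G G' u v) (s t : V) :
    (G.dist s u + (G'.w u v : EReal) + G.dist v t < G.dist s t →
        G'.sigma s t = G.sigma s u * G.sigma v t) ∧
    (G.dist s u + (G'.w u v : EReal) + G.dist v t = G.dist s t ∧ G.dist s t < ⊤ →
        G'.sigma s t = G.sigma s t + G.sigma s u * G.sigma v t) ∧
    (G.dist s u + (G'.w u v : EReal) + G.dist v t > G.dist s t →
        G'.sigma s t = G.sigma s t) := by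
  rw [G'.sigma_eq_ncard_sdiff_add_ncard_SPVia u v s t]
  refine ⟨fun hlt => ?_, fun ⟨heq, hfin⟩ => ?_, fun hgt => ?_⟩
  · have hd' := h.dist'_eq_distVia hlt.le (hlt.trans_le le_top)
    rw [h.SP_sdiff_SPVia_eq_empty (hd' ▸ hlt), h.ncard_SPVia hlt.le hd', Set.ncard_empty,
      zero_add]
  · have hd' := h.dist'_eq_distVia heq.le (heq.trans_lt hfin)
    rw [h.SP_sdiff_SPVia_eq heq.ge (hd'.trans heq), h.ncard_SPVia heq.le hd']
    rfl
  · have hd' := h.dist'_eq_dist hgt.le (hgt.trans_le le_top)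
    rw [h.SP_sdiff_SPVia_eq hgt.le hd', h.SPVia_eq_empty (hd' ▸ hgt), Set.ncard_empty]
    rfl

/-- For all `s, t ∈ V` with `s ≠ t`, writing
`d*(s,t) = d(s,u) + ω'(u,v) + d(v,t)`, the new number of shortest paths satisfies:
if `d*(s,t) < d(s,t)` then `σ'_{st} = σ_{su} · σ_{vt}`;
if `d*(s,t) = d(s,t) < ∞` then `σ'_{st} = σ_{st} + σ_{su} · σ_{vt}`;
and if `d*(s,t) > d(s,t)` then `σ'_{st} = σ_{st}`. -/
theorem sigma'_trichotomy (G G' : WDigraph V) (u v : V)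
    (h : IsUpdate G G' u v) (s t : V) (hst : s ≠ t) :
    (G.dist s u + (G'.w u v : EReal) + G.dist v t < G.dist s t →
        G'.sigma s t = G.sigma s u * G.sigma v t) ∧
    (G.dist s u + (G'.w u v : EReal) + G.dist v t = G.dist s t ∧ G.dist s t < ⊤ →
        G'.sigma s t = G.sigma s t + G.sigma s u * G.sigma v t) ∧
    (G.dist s u + (G'.w u v : EReal) + G.dist v t > G.dist s t →
        G'.sigma s t = G.sigma s t) :=
  sigma'_trichotomy_general G G' u v h s t

end WDigraph
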